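/- arXiv:2605.03478 — 2 statements merged into one kernel-verified Lean document; each statement's English description precedes it below -/
import Mathlib

section
/- Let G be a finite simple graph with an orientation of its edges and triangles. The Helmholtzian matrix H(G) is irreducible if and only if the graph Λ_R(G) is connected. -/
/-!
A square matrix is irreducible exactly when the graph of its nonzero off-diagonal entries is
connected. So it suffices that for distinct edges `e ≠ e'` of `G` the entry `H(e, e')` is nonzero
exactly when `e` and `e'` are adjacent in `Λ_R(G)`. The entry `(B Bᵀ)(e, e')` is `±1` when `e` and
`e'` share an endpoint and `0` otherwise. Two distinct edges lie in at most one common triangle,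
and the contribution of that triangle to `(Cᵀ C)(e, e')` is exactly `-(B Bᵀ)(e, e')`: at the
shared vertex, the cyclic orientation of the triangle points into it along one of `e, e'` and out
of it along the other.
-/

open scoped Classical
open scoped Matrix

namespace HelmPaper

variable {V : Type} [Fintype V] [DecidableEq V]

/-- The set of triangles of `G`, i.e. the 3-element cliques of `G`. -/
abbrev Triangle (G : SimpleGraph V) : Type :=
  {s : Finset V // s.card = 3 ∧ G.IsClique (s : Set V)}

/-- An orientation of the edges of `G`: each edge `e` gets a head `e⁺` and a tail `e⁻`. -/
structure Orientation (G : SimpleGraph V) where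
  head : G.edgeSet → V
  tail : G.edgeSet → V
  consistent : ∀ e : G.edgeSet, (e : Sym2 V) = s(head e, tail e)

/-- A cyclic orientation of each triangle of `G`, recorded by a representative ordered
triple of its three vertices. -/
structure TriOrientation (G : SimpleGraph V) where
  fst : Triangle G → V
  snd : Triangle G → V
  trd : Triangle G → V
  consistent : ∀ t : Triangle G, ({fst t, snd t, trd t} : Finset V) = t.val

/-- The edge-vertex incidence matrix `B`. -/
noncomputable def bMat (G : SimpleGraph V) (o : Orientation G) : Matrix G.edgeSet V ℝ :=
  fun e v => if v = o.head e then 1 else if v = o.tail e then -1 else 0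

/-- The oriented edge `e` agrees with the cyclic orientation of the triangle `t`. -/
def Agrees {G : SimpleGraph V} (o : Orientation G) (τ : TriOrientation G)
    (e : G.edgeSet) (t : Triangle G) : Prop :=
  (o.tail e = τ.fst t ∧ o.head e = τ.snd t) ∨
  (o.tail e = τ.snd t ∧ o.head e = τ.trd t) ∨
  (o.tail e = τ.trd t ∧ o.head e = τ.fst t)

/-- The oriented edge `e` disagrees with the cyclic orientation of the triangle `t`. -/
def Disagrees {G : SimpleGraph V} (o : Orientation G) (τ : TriOrientation G)
    (e : G.edgeSet) (t : Triangle G) : Prop :=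
  (o.head e = τ.fst t ∧ o.tail e = τ.snd t) ∨
  (o.head e = τ.snd t ∧ o.tail e = τ.trd t) ∨
  (o.head e = τ.trd t ∧ o.tail e = τ.fst t)

/-- The triangle-edge incidence matrix `C`. -/
noncomputable def cMat (G : SimpleGraph V) (o : Orientation G) (τ : TriOrientation G) :
    Matrix (Triangle G) G.edgeSet ℝ :=
  fun t e => if Agrees o τ e t then 1 else if Disagrees o τ e t then -1 else 0

/-- The Helmholtzian matrix `H(G) = B Bᵀ + Cᵀ C`. -/
noncomputable def helm (G : SimpleGraph V) (o : Orientation G) (τ : TriOrientation G) :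
    Matrix G.edgeSet G.edgeSet ℝ :=
  bMat G o * (bMat G o)ᵀ + (cMat G o τ)ᵀ * cMat G o τ

/-- The edge `e` (as an unordered pair of vertices) lies in the triangle `t`. -/
def EdgeInTri (G : SimpleGraph V) (e : Sym2 V) (t : Triangle G) : Prop :=
  ∀ v ∈ e, v ∈ t.val

/-- The triangle degree `△(e)`: the number of triangles of `G` containing the edge `e`. -/
noncomputable def triDeg (G : SimpleGraph V) (e : Sym2 V) : ℕ :=
  (Finset.univ.filter fun t : Triangle G => EdgeInTri G e t).card

/-- A square matrix is *reducible* if some simultaneous permutation of its rows and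
columns puts it in block diagonal form with two non-trivial square diagonal blocks. -/
def MatReducible {α : Type} [Fintype α] [DecidableEq α] (M : Matrix α α ℝ) : Prop :=
  ∃ (p q : ℕ), 0 < p ∧ 0 < q ∧
    ∃ (σ : α ≃ (Fin p ⊕ Fin q)) (A : Matrix (Fin p) (Fin p) ℝ)
      (D : Matrix (Fin q) (Fin q) ℝ),
      Matrix.reindex σ σ M = Matrix.fromBlocks A 0 0 D

/-- The underlying graph of the signed graph `Λ_R(G)`: its vertices are the edges of `G`,
and two distinct edges of `G` are adjacent when they share an endpoint and lie in no
common triangle of `G` (this underlying adjacency does not depend on the orientation). -/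
def lambdaR (G : SimpleGraph V) : SimpleGraph G.edgeSet where
  Adj e e' := e ≠ e' ∧ (∃ v : V, v ∈ (e : Sym2 V) ∧ v ∈ (e' : Sym2 V)) ∧
    ¬∃ t : Triangle G, EdgeInTri G (e : Sym2 V) t ∧ EdgeInTri G (e' : Sym2 V) t
  symm := by
    constructor
    rintro e e' ⟨h₁, ⟨v, hv₁, hv₂⟩, h₃⟩
    exact ⟨h₁.symm, ⟨v, hv₂, hv₁⟩, fun ⟨t, ht₁, ht₂⟩ => h₃ ⟨t, ht₂, ht₁⟩⟩
  loopless := by constructor; rintro e ⟨h, _⟩; exact h rfl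

theorem matReducible_iff_exists_cut {α : Type} [Fintype α] [DecidableEq α] (M : Matrix α α ℝ) :
    MatReducible M ↔ ∃ S : Set α, S.Nonempty ∧ Sᶜ.Nonempty ∧
      ∀ i ∈ S, ∀ j ∉ S, M i j = 0 ∧ M j i = 0 := by
  constructor
  · rintro ⟨p, q, hp, hq, σ, A, D, hM⟩
    have hentry : ∀ i j, M i j = Matrix.fromBlocks A 0 0 D (σ i) (σ j) := by
      simp [← hM, Matrix.reindex_apply]
    refine ⟨{i | (σ i).isLeft}, ⟨σ.symm (.inl ⟨0, hp⟩), by simp⟩,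
      ⟨σ.symm (.inr ⟨0, hq⟩), by simp⟩, fun i hi j hj => ?_⟩
    obtain ⟨x, hx⟩ := Sum.isLeft_iff.mp hi
    obtain ⟨y, hy⟩ := Sum.isRight_iff.mp (Sum.not_isLeft.mp hj)
    simp [hentry, hx, hy]
  · rintro ⟨S, hS, hSc, hcut⟩
    have := hS.to_subtype
    have := hSc.to_subtype
    let σ : α ≃ Fin (Fintype.card S) ⊕ Fin (Fintype.card (Sᶜ : Set α)) :=
      (Equiv.sumCompl (· ∈ S)).symm.trans
        (Equiv.sumCongr (Fintype.equivFin S) (Fintype.equivFin (Sᶜ : Set α)))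
    have hinl : ∀ x, σ.symm (.inl x) ∈ S := fun x => ((Fintype.equivFin S).symm x).2
    have hinr : ∀ y, σ.symm (.inr y) ∉ S := fun y => ((Fintype.equivFin _).symm y).2
    set N := Matrix.reindex σ σ M
    refine ⟨_, _, Fintype.card_pos, Fintype.card_pos, σ, N.toBlocks₁₁, N.toBlocks₂₂, ?_⟩
    refine N.fromBlocks_toBlocks.symm.trans ?_
    congr 1 <;> ext x y
    · exact (hcut _ (hinl x) _ (hinr y)).1
    · exact (hcut _ (hinl y) _ (hinr x)).2

theorem connected_iff_forall_cut_exists_adj {α : Type} [Nonempty α] (G : SimpleGraph α) :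
    G.Connected ↔ ∀ S : Set α, S.Nonempty → Sᶜ.Nonempty → ∃ i ∈ S, ∃ j ∉ S, G.Adj i j := by
  refine ⟨fun hG S ⟨a, ha⟩ ⟨b, hb⟩ => ?_, fun hcut => ?_⟩
  · obtain ⟨d, -, hd, hd'⟩ := (hG a b).some.exists_boundary_dart S ha hb
    exact ⟨_, hd, _, hd', d.adj⟩
  · refine (SimpleGraph.connected_iff G).mpr ⟨fun a b => ?_, inferInstance⟩
    by_contra hab
    obtain ⟨i, hi, j, hj, hij⟩ := hcut {x | G.Reachable a x} ⟨a, .rfl⟩ ⟨b, hab⟩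
    exact hj (hi.trans hij.reachable)

theorem not_matReducible_iff_connected {α : Type} [Fintype α] [DecidableEq α] [Nonempty α]
    (M : Matrix α α ℝ) :
    ¬MatReducible M ↔ (SimpleGraph.fromRel fun i j => M i j ≠ 0).Connected := by
  rw [matReducible_iff_exists_cut, connected_iff_forall_cut_exists_adj]
  simp only [SimpleGraph.fromRel_adj, not_exists, not_and, not_forall, exists_prop, ne_eq]
  refine forall_congr' fun S => imp_congr_right fun _ => imp_congr_right fun _ =>
    exists_congr fun i => and_congr_right fun hi => exists_congr fun j =>
      and_congr_right fun hj => ?_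
  have : i ≠ j := ne_of_mem_of_not_mem hi hj
  tauto

section Helmholtzian

variable {G : SimpleGraph V} (o : Orientation G) (τ : TriOrientation G)

omit [Fintype V] [DecidableEq V] in
theorem Orientation.head_ne_tail (e : G.edgeSet) : o.head e ≠ o.tail e := by
  have he := e.2
  rw [o.consistent e, SimpleGraph.mem_edgeSet] at he
  exact he.ne

omit [Fintype V] [DecidableEq V] in
theorem Orientation.mem_iff {e : G.edgeSet} {v : V} :
    v ∈ (e : Sym2 V) ↔ v = o.head e ∨ v = o.tail e := by
  rw [o.consistent e, Sym2.mem_iff]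

omit [Fintype V] [DecidableEq V] in
theorem Orientation.eq_iff {e e' : G.edgeSet} : e = e' ↔
    o.head e = o.head e' ∧ o.tail e = o.tail e' ∨ o.head e = o.tail e' ∧ o.tail e = o.head e' := by
  rw [Subtype.ext_iff, o.consistent e, o.consistent e', Sym2.eq_iff]

omit [Fintype V] in
theorem TriOrientation.mem_iff {t : Triangle G} {v : V} :
    v ∈ t.val ↔ v = τ.fst t ∨ v = τ.snd t ∨ v = τ.trd t := by
  rw [← τ.consistent t]
  simp

omit [Fintype V] in
theorem TriOrientation.pairwise_ne (t : Triangle G) :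
    τ.fst t ≠ τ.snd t ∧ τ.fst t ≠ τ.trd t ∧ τ.snd t ≠ τ.trd t := by
  have h := τ.consistent t ▸ t.2.1
  refine ⟨fun h' => ?_, fun h' => ?_, fun h' => ?_⟩ <;> rw [h'] at h
  all_goals
    simp only [Finset.mem_insert, Finset.mem_singleton, true_or, or_true,
      Finset.insert_eq_of_mem] at h
    exact absurd (h ▸ Finset.card_le_two) (by norm_num)

omit [Fintype V] [DecidableEq V] in
theorem edgeInTri_iff {e : G.edgeSet} {t : Triangle G} :
    EdgeInTri G e t ↔ o.head e ∈ t.val ∧ o.tail e ∈ t.val := by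
  simp only [EdgeInTri, o.mem_iff, forall_eq_or_imp, forall_eq]

omit [Fintype V] in
theorem cMat_eq_zero_of_not_edgeInTri {e : G.edgeSet} {t : Triangle G}
    (h : ¬EdgeInTri G e t) : cMat G o τ t e = 0 := by
  rw [edgeInTri_iff o, τ.mem_iff, τ.mem_iff] at h
  have hA : ¬Agrees o τ e t := by unfold Agrees; tauto
  have hD : ¬Disagrees o τ e t := by unfold Disagrees; tauto
  simp [cMat, hA, hD]

theorem bMat_mul_transpose_apply (e e' : G.edgeSet) :
    (bMat G o * (bMat G o)ᵀ) e e' =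
      (if o.head e = o.head e' then 1 else 0) - (if o.head e = o.tail e' then 1 else 0) -
      (if o.tail e = o.head e' then 1 else 0) + (if o.tail e = o.tail e' then 1 else 0) := by
  have hb : ∀ f v, bMat G o f v =
      (if v = o.head f then 1 else 0) - (if v = o.tail f then 1 else 0) := by
    intro f v
    have := o.head_ne_tail f
    unfold bMat
    split_ifs <;> simp_all
  simp only [Matrix.mul_apply, Matrix.transpose_apply, hb, sub_mul, mul_sub, Finset.sum_sub_distrib,
    ite_mul, one_mul, zero_mul, Finset.sum_ite_eq', Finset.mem_univ, if_true]
  ring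

theorem bMat_mul_transpose_apply_ne_zero_iff {e e' : G.edgeSet} (hne : e ≠ e') :
    (bMat G o * (bMat G o)ᵀ) e e' ≠ 0 ↔ ∃ v, v ∈ (e : Sym2 V) ∧ v ∈ (e' : Sym2 V) := by
  have := o.head_ne_tail e
  have := o.head_ne_tail e'
  replace hne := mt o.eq_iff.mpr hne
  simp only [bMat_mul_transpose_apply, o.mem_iff]
  split_ifs <;> simp_all

theorem cMat_mul_cMat_add_bMat_mul_transpose {e e' : G.edgeSet} (hne : e ≠ e') {t : Triangle G}
    (he : EdgeInTri G e t) (he' : EdgeInTri G e' t) :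
    cMat G o τ t e * cMat G o τ t e' + (bMat G o * (bMat G o)ᵀ) e e' = 0 := by
  rw [edgeInTri_iff o, τ.mem_iff, τ.mem_iff] at he he'
  replace hne := mt o.eq_iff.mpr hne
  have hht := o.head_ne_tail e
  have hht' := o.head_ne_tail e'
  obtain ⟨hab, hac, hbc⟩ := τ.pairwise_ne t
  simp only [cMat, Agrees, Disagrees, bMat_mul_transpose_apply]
  obtain ⟨hh | hh | hh, hu | hu | hu⟩ := he <;> obtain ⟨hh' | hh' | hh', hu' | hu' | hu'⟩ := he' <;>
    simp [hh, hu, hh', hu', hab, hac, hbc, hab.symm, hac.symm, hbc.symm] at hne hht hht' ⊢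

theorem eq_of_edgeInTri_of_edgeInTri {e e' : G.edgeSet} (hne : e ≠ e') {t₁ t₂ : Triangle G}
    (h₁ : EdgeInTri G e t₁) (h₁' : EdgeInTri G e' t₁) (h₂ : EdgeInTri G e t₂)
    (h₂' : EdgeInTri G e' t₂) : t₁ = t₂ := by
  obtain ⟨e, he⟩ := e
  obtain ⟨e', he'⟩ := e'
  induction e using Sym2.ind with | h a b => ?_
  induction e' using Sym2.ind with | h c d => ?_
  obtain ⟨w, hw, hwab⟩ : ∃ w ∈ s(c, d), w ∉ s(a, b) := by
    by_contra! h
    exact hne (Subtype.ext (Sym2.eq_of_ne_mem (G.ne_of_adj he') (h c (Sym2.mem_mk_left c d))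
      (h d (Sym2.mem_mk_right c d)) (Sym2.mem_mk_left c d) (Sym2.mem_mk_right c d)))
  rw [Sym2.mem_iff, not_or] at hwab
  have key : ∀ t : Triangle G, EdgeInTri G s(a, b) t → EdgeInTri G s(c, d) t →
      t.val = {w, a, b} := by
    intro t ht ht'
    refine (Finset.eq_of_subset_of_card_le ?_ ?_).symm
    · simp [Finset.insert_subset_iff, ht' w hw, ht a (Sym2.mem_mk_left a b),
        ht b (Sym2.mem_mk_right a b)]
    · rw [t.2.1, Finset.card_eq_three.mpr ⟨w, a, b, hwab.1, hwab.2, G.ne_of_adj he, rfl⟩]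
  exact Subtype.ext ((key t₁ h₁ h₁').trans (key t₂ h₂ h₂').symm)

theorem transpose_cMat_mul_cMat_apply_of_edgeInTri {e e' : G.edgeSet} (hne : e ≠ e')
    {t : Triangle G} (he : EdgeInTri G e t) (he' : EdgeInTri G e' t) :
    ((cMat G o τ)ᵀ * cMat G o τ) e e' = cMat G o τ t e * cMat G o τ t e' := by
  simp only [Matrix.mul_apply, Matrix.transpose_apply]
  refine Finset.sum_eq_single t (fun s _ hst => ?_) (by simp)
  by_cases hs : EdgeInTri G e s
  · by_cases hs' : EdgeInTri G e' s
    · exact absurd (eq_of_edgeInTri_of_edgeInTri hne hs hs' he he') hst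
    · rw [cMat_eq_zero_of_not_edgeInTri o τ hs', mul_zero]
  · rw [cMat_eq_zero_of_not_edgeInTri o τ hs, zero_mul]

theorem transpose_cMat_mul_cMat_apply_eq_zero {e e' : G.edgeSet}
    (h : ¬∃ t : Triangle G, EdgeInTri G e t ∧ EdgeInTri G e' t) :
    ((cMat G o τ)ᵀ * cMat G o τ) e e' = 0 := by
  simp only [Matrix.mul_apply, Matrix.transpose_apply]
  refine Finset.sum_eq_zero fun s _ => ?_
  by_cases hs : EdgeInTri G e s
  · rw [cMat_eq_zero_of_not_edgeInTri o τ fun hs' => h ⟨s, hs, hs'⟩, mul_zero]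
  · rw [cMat_eq_zero_of_not_edgeInTri o τ hs, zero_mul]

theorem helm_apply_ne_zero_iff {e e' : G.edgeSet} (hne : e ≠ e') :
    helm G o τ e e' ≠ 0 ↔ (lambdaR G).Adj e e' := by
  by_cases hT : ∃ t : Triangle G, EdgeInTri G e t ∧ EdgeInTri G e' t
  · obtain ⟨t, he, he'⟩ := hT
    have hzero : helm G o τ e e' = 0 := by
      rw [helm, Matrix.add_apply, transpose_cMat_mul_cMat_apply_of_edgeInTri o τ hne he he',
        add_comm]
      exact cMat_mul_cMat_add_bMat_mul_transpose o τ hne he he'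
    simp only [hzero, ne_eq, not_true_eq_false, false_iff]
    exact fun hadj => hadj.2.2 ⟨t, he, he'⟩
  · rw [helm, Matrix.add_apply, transpose_cMat_mul_cMat_apply_eq_zero o τ hT, add_zero,
      bMat_mul_transpose_apply_ne_zero_iff o hne]
    exact ⟨fun hv => ⟨hne, hv, hT⟩, fun hadj => hadj.2.1⟩

theorem fromRel_helm_ne_zero_eq_lambdaR :
    SimpleGraph.fromRel (fun e e' => helm G o τ e e' ≠ 0) = lambdaR G := by
  ext e e'
  rw [SimpleGraph.fromRel_adj]
  constructor
  · rintro ⟨hne, h | h⟩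
    · exact (helm_apply_ne_zero_iff o τ hne).mp h
    · exact ((helm_apply_ne_zero_iff o τ hne.symm).mp h).symm
  · exact fun hadj => ⟨hadj.ne, .inl ((helm_apply_ne_zero_iff o τ hadj.ne).mpr hadj)⟩

end Helmholtzian

/-- `H(G)` is irreducible if and only if `Λ_R(G)` is connected. -/
theorem statement9 (G : SimpleGraph V) [Nonempty G.edgeSet]
    (o : Orientation G) (τ : TriOrientation G) :
    ¬MatReducible (helm G o τ) ↔ (lambdaR G).Connected := by
  rw [not_matReducible_iff_connected, fromRel_helm_ne_zero_eq_lambdaR]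

end HelmPaper
end

section
/- Let G be a finite simple graph with an orientation of its edges and triangles, largest H-eigenvalue λ₁ and largest Laplacian eigenvalue μ₁. Then λ₁ ≤ max{μ₁, 3·max_{e∈E(G)} △(e)}. Moreover, if the number of triangles of G satisfies t(G) ≤ ⌊(Δ(G)+1)/3⌋, where Δ(G) is the maximum vertex degree, then λ₁ = μ₁. -/
open scoped Classical
open scoped Matrix

/-! Since `C * B = 0` (the boundary of a triangle is a cycle), the two summands of
`H = B Bᵀ + Cᵀ C` annihilate each other, so a nonzero eigenvalue of `H` is an eigenvalue of
`B Bᵀ`, hence of `L = Bᵀ B`, or of `Cᵀ C`. Gershgorin's theorem bounds the latter by the absolute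
row sums of `Cᵀ C`, which are at most `3 △(e)`. Conversely, every positive eigenvalue of `L` is
one of `H`. For the equality, `3 max △(e) ≤ 3 t(G) ≤ Δ + 1 ≤ μ₁`, the last step by the Rayleigh
quotient of `Δ 𝟙_v - 𝟙_{N(v)}` at a vertex `v` of maximum degree. -/

namespace Matrix

section Field

variable {K m n : Type*} [Field K] [Fintype m] [Fintype n] [DecidableEq m] [DecidableEq n]

theorem mem_spectrum_iff_exists_mulVec_eq_smul {A : Matrix n n K} {μ : K} :
    μ ∈ spectrum K A ↔ ∃ v ≠ 0, A *ᵥ v = μ • v := by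
  rw [← spectrum_toLin', ← Module.End.hasEigenvalue_iff_mem_spectrum]
  constructor
  · intro h
    obtain ⟨v, hv⟩ := h.exists_hasEigenvector
    exact ⟨v, hv.2, by simpa using hv.apply_eq_smul⟩
  · rintro ⟨v, hv, hAv⟩
    exact Module.End.hasEigenvalue_of_hasEigenvector ⟨by simpa using hAv, hv⟩

theorem mem_spectrum_mul_comm_of_ne_zero {M : Matrix m n K} {N : Matrix n m K} {μ : K}
    (hμ : μ ≠ 0) (h : μ ∈ spectrum K (M * N)) : μ ∈ spectrum K (N * M) := by
  obtain ⟨v, hv, hMN⟩ := mem_spectrum_iff_exists_mulVec_eq_smul.mp h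
  have hMw : M *ᵥ (N *ᵥ v) = μ • v := by rw [mulVec_mulVec, hMN]
  refine mem_spectrum_iff_exists_mulVec_eq_smul.mpr ⟨N *ᵥ v, fun h0 => ?_, ?_⟩
  · rw [h0, mulVec_zero] at hMw
    exact hv ((smul_eq_zero.mp hMw.symm).resolve_left hμ)
  · rw [← mulVec_mulVec, hMw, mulVec_smul]

variable {E V T : Type*} [Fintype E] [Fintype V] [Fintype T] [DecidableEq E] [DecidableEq V]
  {B : Matrix E V K} {C : Matrix T E K} {μ : K}

theorem mem_spectrum_add_of_mem_spectrum_transpose_mul (hCB : C * B = 0) (hμ : μ ≠ 0)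
    (h : μ ∈ spectrum K (Bᵀ * B)) : μ ∈ spectrum K (B * Bᵀ + Cᵀ * C) := by
  obtain ⟨w, hw, hBBw⟩ := mem_spectrum_iff_exists_mulVec_eq_smul.mp h
  refine mem_spectrum_iff_exists_mulVec_eq_smul.mpr ⟨B *ᵥ w, fun h0 => hw ?_, ?_⟩
  · rw [← mulVec_mulVec, h0, mulVec_zero] at hBBw
    exact (smul_eq_zero.mp hBBw.symm).resolve_left hμ
  · rw [add_mulVec, mulVec_mulVec, mulVec_mulVec, Matrix.mul_assoc, ← mulVec_mulVec, hBBw,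
      Matrix.mul_assoc, hCB, Matrix.mul_zero, zero_mulVec, add_zero, mulVec_smul]

theorem mem_spectrum_transpose_mul_or_of_mem_spectrum_add (hCB : C * B = 0) (hμ : μ ≠ 0)
    (h : μ ∈ spectrum K (B * Bᵀ + Cᵀ * C)) :
    μ ∈ spectrum K (Bᵀ * B) ∨ μ ∈ spectrum K (Cᵀ * C) := by
  obtain ⟨x, hx, hHx⟩ := mem_spectrum_iff_exists_mulVec_eq_smul.mp h
  have hBC : Bᵀ * Cᵀ = 0 := by rw [← transpose_mul, hCB, transpose_zero]
  have hdown : B * Bᵀ * (Cᵀ * C) = 0 := by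
    rw [Matrix.mul_assoc, ← Matrix.mul_assoc Bᵀ, hBC, Matrix.zero_mul, Matrix.mul_zero]
  have hup : Cᵀ * C * (B * Bᵀ) = 0 := by
    rw [Matrix.mul_assoc, ← Matrix.mul_assoc C, hCB, Matrix.zero_mul, Matrix.mul_zero]
  set y := (B * Bᵀ) *ᵥ x
  set z := (Cᵀ * C) *ᵥ x
  have hyz : y + z = μ • x := by rw [← hHx, add_mulVec]
  have hy : (B * Bᵀ) *ᵥ y = μ • y := by
    have := congrArg ((B * Bᵀ) *ᵥ ·) hyz
    simpa [mulVec_add, mulVec_mulVec, hdown, mulVec_smul, y, z] using this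
  have hz : (Cᵀ * C) *ᵥ z = μ • z := by
    have := congrArg ((Cᵀ * C) *ᵥ ·) hyz
    simpa [mulVec_add, mulVec_mulVec, hup, mulVec_smul, y, z] using this
  by_cases hy0 : y = 0
  · refine Or.inr (mem_spectrum_iff_exists_mulVec_eq_smul.mpr ⟨z, fun hz0 => hx ?_, hz⟩)
    rw [hy0, hz0, add_zero] at hyz
    exact (smul_eq_zero.mp hyz.symm).resolve_left hμ
  · exact Or.inl (mem_spectrum_mul_comm_of_ne_zero hμ
      (mem_spectrum_iff_exists_mulVec_eq_smul.mpr ⟨y, hy0, hy⟩))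

end Field

section Real

variable {n : Type*} [Fintype n] [DecidableEq n]

theorem le_of_mem_spectrum_of_sum_abs_le {A : Matrix n n ℝ} {μ c : ℝ} (hμ : μ ∈ spectrum ℝ A)
    (hc : ∀ i, ∑ j, |A i j| ≤ c) : μ ≤ c := by
  rw [← spectrum_toLin', ← Module.End.hasEigenvalue_iff_mem_spectrum] at hμ
  obtain ⟨k, hk⟩ := eigenvalue_mem_ball hμ
  simp only [Metric.mem_closedBall, Real.dist_eq, Real.norm_eq_abs] at hk
  calc μ ≤ |A k k| + ∑ j ∈ Finset.univ.erase k, |A k j| := by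
        linarith [le_abs_self (μ - A k k), le_abs_self (A k k)]
    _ = ∑ j, |A k j| := Finset.add_sum_erase _ (fun j => |A k j|) (Finset.mem_univ k)
    _ ≤ c := hc k

namespace IsHermitian

open scoped MatrixOrder

variable {A : Matrix n n ℝ}

theorem dotProduct_mulVec_le (hA : A.IsHermitian) {c : ℝ} (hc : ∀ μ ∈ spectrum ℝ A, μ ≤ c)
    (x : n → ℝ) : x ⬝ᵥ (A *ᵥ x) ≤ c * (x ⬝ᵥ x) := by
  have hle : A ≤ algebraMap ℝ (Matrix n n ℝ) c := le_algebraMap_of_spectrum_le hc hA.isSelfAdjoint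
  have := (le_iff.mp hle).dotProduct_mulVec_nonneg x
  simpa [sub_mulVec, Algebra.algebraMap_eq_smul_one, smul_mulVec, dotProduct_smul] using this

end IsHermitian

variable {E V T : Type*} [Fintype E] [Fintype V] [Fintype T] [DecidableEq E] [DecidableEq V]
  {B : Matrix E V ℝ} {C : Matrix T E ℝ} {c : ℝ}

theorem sSup_spectrum_add_le (hCB : C * B = 0) (hc : 0 ≤ c)
    (hrow : ∀ i, ∑ j, |(Cᵀ * C) i j| ≤ c) :
    sSup (spectrum ℝ (B * Bᵀ + Cᵀ * C)) ≤ max (sSup (spectrum ℝ (Bᵀ * B))) c := by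
  refine Real.sSup_le (fun μ hμ => ?_) (le_max_of_le_right hc)
  rcases eq_or_ne μ 0 with rfl | hμ0
  · exact le_max_of_le_right hc
  rcases mem_spectrum_transpose_mul_or_of_mem_spectrum_add hCB hμ0 hμ with hL | hC
  · exact le_max_of_le_left (le_csSup (finite_spectrum _).bddAbove hL)
  · exact le_max_of_le_right (le_of_mem_spectrum_of_sum_abs_le hC hrow)

theorem sSup_spectrum_add_eq (hCB : C * B = 0) (hc : 0 ≤ c)
    (hrow : ∀ i, ∑ j, |(Cᵀ * C) i j| ≤ c) (hcμ : c ≤ sSup (spectrum ℝ (Bᵀ * B)))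
    (hμ : 0 < sSup (spectrum ℝ (Bᵀ * B))) :
    sSup (spectrum ℝ (B * Bᵀ + Cᵀ * C)) = sSup (spectrum ℝ (Bᵀ * B)) := by
  refine le_antisymm ((sSup_spectrum_add_le hCB hc hrow).trans_eq (max_eq_left hcμ)) ?_
  have hne : (spectrum ℝ (Bᵀ * B)).Nonempty :=
    Set.nonempty_iff_ne_empty.mpr fun h => by simp [h] at hμ
  exact le_csSup (finite_spectrum _).bddAbove (mem_spectrum_add_of_mem_spectrum_transpose_mul hCB
    hμ.ne' (hne.csSup_mem (finite_spectrum _)))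

end Real

end Matrix

namespace HelmPaper

section

variable {V : Type} {G : SimpleGraph V}

theorem Orientation.adj_head_tail (o : Orientation G) (e : G.edgeSet) :
    G.Adj (o.head e) (o.tail e) := by
  simpa [o.consistent e] using e.2

variable [DecidableEq V]

theorem bMat_apply (o : Orientation G) (e : G.edgeSet) (v : V) :
    bMat G o e v = (if v = o.head e then 1 else 0) - (if v = o.tail e then 1 else 0) := by
  have hne := (o.adj_head_tail e).ne
  unfold bMat
  split_ifs <;> simp_all

theorem bMat_mulVec_apply [Fintype V] (o : Orientation G) (x : V → ℝ) (e : G.edgeSet) :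
    (bMat G o *ᵥ x) e = x (o.head e) - x (o.tail e) := by
  simp [Matrix.mulVec, dotProduct, bMat_apply, sub_mul, Finset.sum_sub_distrib]

namespace TriOrientation

variable (τ : TriOrientation G) (t : Triangle G)

def vert : Fin 3 → V := ![τ.fst t, τ.snd t, τ.trd t]

theorem image_vert : Finset.univ.image (τ.vert t) = t.val := by
  rw [← τ.consistent t]
  ext v
  simp [vert, Fin.exists_fin_succ, eq_comm]

theorem vert_mem (i : Fin 3) : τ.vert t i ∈ t.val := by
  rw [← τ.image_vert t]
  exact Finset.mem_image_of_mem _ (Finset.mem_univ i)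

theorem vert_injective : Function.Injective (τ.vert t) := by
  have h : (Finset.univ.image (τ.vert t)).card = (Finset.univ : Finset (Fin 3)).card := by
    rw [τ.image_vert t, t.2.1, Finset.card_univ, Fintype.card_fin]
  simpa using Finset.card_image_iff.mp h

theorem adj_vert (i : Fin 3) : G.Adj (τ.vert t i) (τ.vert t (i + 1)) :=
  t.2.2 (τ.vert_mem t i) (τ.vert_mem t (i + 1))
    ((τ.vert_injective t).ne (by fin_cases i <;> decide))

def edge (i : Fin 3) : G.edgeSet := ⟨s(τ.vert t i, τ.vert t (i + 1)), τ.adj_vert t i⟩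

theorem edge_injective : Function.Injective (τ.edge t) := by
  intro i j h
  have hinj := τ.vert_injective t
  rcases Sym2.eq_iff.mp (Subtype.ext_iff.mp h) with ⟨hi, -⟩ | ⟨hi, hj⟩
  · exact hinj hi
  · have key : ∀ i j : Fin 3, i = j + 1 → i + 1 = j → i = j := by decide
    exact key i j (hinj hi) (hinj hj)

end TriOrientation

theorem agrees_iff (o : Orientation G) (τ : TriOrientation G) (e : G.edgeSet) (t : Triangle G) :
    Agrees o τ e t ↔ ∃ i, o.tail e = τ.vert t i ∧ o.head e = τ.vert t (i + 1) := by
  simp [Agrees, Fin.exists_fin_succ, TriOrientation.vert]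

theorem disagrees_iff (o : Orientation G) (τ : TriOrientation G) (e : G.edgeSet) (t : Triangle G) :
    Disagrees o τ e t ↔ ∃ i, o.head e = τ.vert t i ∧ o.tail e = τ.vert t (i + 1) := by
  simp [Disagrees, Fin.exists_fin_succ, TriOrientation.vert]

variable (o : Orientation G) (τ : TriOrientation G)

theorem cMat_mul_bMat_edge (t : Triangle G) (i : Fin 3) (v : V) :
    cMat G o τ t (τ.edge t i) * bMat G o (τ.edge t i) v =
      (if v = τ.vert t (i + 1) then 1 else 0) - (if v = τ.vert t i then 1 else 0) := by
  have hinj := τ.vert_injective t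
  rcases Sym2.eq_iff.mp (o.consistent (τ.edge t i)).symm with ⟨hh, ht⟩ | ⟨hh, ht⟩
  · have key : ∀ i j : Fin 3, i + 1 = j → i = j + 1 → False := by decide
    have hnA : ¬ Agrees o τ (τ.edge t i) t := by
      rw [agrees_iff]
      rintro ⟨j, hj, hj'⟩
      exact key i j (hinj (ht.symm.trans hj)) (hinj (hh.symm.trans hj'))
    have hD : Disagrees o τ (τ.edge t i) t := (disagrees_iff ..).mpr ⟨i, hh, ht⟩
    simp only [cMat, if_neg hnA, if_pos hD, bMat_apply, hh, ht]
    ring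
  · have hA : Agrees o τ (τ.edge t i) t := (agrees_iff ..).mpr ⟨i, ht, hh⟩
    simp only [cMat, if_pos hA, bMat_apply, hh, ht]
    ring

theorem cMat_eq_zero_of_notMem_range_edge {t : Triangle G} {e : G.edgeSet}
    (he : e ∉ Set.range (τ.edge t)) : cMat G o τ t e = 0 := by
  have hA : ¬ Agrees o τ e t := by
    rw [agrees_iff]
    rintro ⟨i, ht, hh⟩
    exact he ⟨i, Subtype.ext (by rw [o.consistent e, ht, hh, Sym2.eq_swap]; rfl)⟩
  have hD : ¬ Disagrees o τ e t := by
    rw [disagrees_iff]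
    rintro ⟨i, hh, ht⟩
    exact he ⟨i, Subtype.ext (by rw [o.consistent e, ht, hh]; rfl)⟩
  simp only [cMat, if_neg hA, if_neg hD]

theorem cMat_mul_bMat [Fintype V] : cMat G o τ * bMat G o = 0 := by
  ext t v
  rw [Matrix.mul_apply, Matrix.zero_apply, ← Fintype.sum_of_injective (τ.edge t)
    (τ.edge_injective t) _ _ (fun e he => by rw [cMat_eq_zero_of_notMem_range_edge o τ he,
      zero_mul]) (fun _ => rfl)]
  simp only [cMat_mul_bMat_edge, Finset.sum_sub_distrib]
  exact sub_eq_zero.mpr (Equiv.sum_comp (Equiv.addRight (1 : Fin 3)) fun i =>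
    if v = τ.vert t i then (1 : ℝ) else 0)

theorem abs_cMat_le_one (t : Triangle G) (e : G.edgeSet) : |cMat G o τ t e| ≤ 1 := by
  unfold cMat
  split_ifs <;> norm_num

theorem sum_abs_cMat_le_three [Fintype V] (t : Triangle G) : ∑ e, |cMat G o τ t e| ≤ 3 := by
  rw [← Fintype.sum_of_injective (τ.edge t) (τ.edge_injective t) _ _
    (fun e he => by rw [cMat_eq_zero_of_notMem_range_edge o τ he, abs_zero]) (fun _ => rfl)]
  calc ∑ i, |cMat G o τ t (τ.edge t i)| ≤ ∑ _i : Fin 3, (1 : ℝ) :=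
        Finset.sum_le_sum fun i _ => abs_cMat_le_one o τ t _
    _ = 3 := by norm_num

theorem abs_cMat_le_indicator (t : Triangle G) (e : G.edgeSet) :
    |cMat G o τ t e| ≤ if EdgeInTri G e t then 1 else 0 := by
  by_cases he : e ∈ Set.range (τ.edge t)
  · obtain ⟨i, rfl⟩ := he
    have hin : EdgeInTri G (τ.edge t i) t := by
      intro v hv
      rcases Sym2.mem_iff.mp hv with rfl | rfl <;> exact τ.vert_mem t _
    rw [if_pos hin]
    exact abs_cMat_le_one o τ t _
  · rw [cMat_eq_zero_of_notMem_range_edge o τ he, abs_zero]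
    split_ifs <;> norm_num

theorem sum_abs_transpose_cMat_mul_cMat_le [Fintype V] (e : G.edgeSet) :
    ∑ f, |((cMat G o τ)ᵀ * cMat G o τ) e f| ≤ 3 * triDeg G e := by
  calc ∑ f, |((cMat G o τ)ᵀ * cMat G o τ) e f|
      ≤ ∑ f, ∑ t, |cMat G o τ t e| * |cMat G o τ t f| := by
        refine Finset.sum_le_sum fun f _ => ?_
        simpa only [Matrix.mul_apply, Matrix.transpose_apply, abs_mul]
          using Finset.abs_sum_le_sum_abs (fun t => cMat G o τ t e * cMat G o τ t f) Finset.univ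
    _ = ∑ t, |cMat G o τ t e| * ∑ f, |cMat G o τ t f| := by
        rw [Finset.sum_comm]
        simp only [Finset.mul_sum]
    _ ≤ ∑ t, (if EdgeInTri G e t then 1 else 0) * 3 :=
        Finset.sum_le_sum fun t _ => mul_le_mul (abs_cMat_le_indicator o τ t e)
          (sum_abs_cMat_le_three o τ t) (Finset.sum_nonneg fun f _ => abs_nonneg (cMat G o τ t f))
          (by split_ifs <;> norm_num)
    _ = 3 * triDeg G e := by
        rw [← Finset.sum_mul, Finset.sum_boole, triDeg, mul_comm]

end

variable {V : Type} [Fintype V] [DecidableEq V]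

section

variable {G : SimpleGraph V}

theorem card_filter_mem_edgeSet (v : V) :
    (Finset.univ.filter fun e : G.edgeSet => v ∈ (e : Sym2 V)).card = G.degree v := by
  rw [← G.card_incidenceFinset_eq_degree]
  refine Finset.card_bij (fun e _ => e.val) (fun e he => ?_) (fun _ _ _ _ => Subtype.ext)
    (fun e he => ?_)
  · exact (G.mem_incidenceFinset v e).mpr ⟨e.2, (Finset.mem_filter.mp he).2⟩
  · obtain ⟨he, hv⟩ := (G.mem_incidenceFinset v e).mp he
    exact ⟨⟨e, he⟩, Finset.mem_filter.mpr ⟨Finset.mem_univ _, hv⟩, rfl⟩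

noncomputable def starVec (G : SimpleGraph V) (v : V) : V → ℝ :=
  fun u => if u = v then (G.degree v : ℝ) else if G.Adj v u then -1 else 0

theorem starVec_dotProduct_self (v : V) :
    starVec G v ⬝ᵥ starVec G v = G.degree v * (G.degree v + 1) := by
  have hsq (u : V) : starVec G v u * starVec G v u =
      (if u = v then (G.degree v : ℝ) ^ 2 else 0) + (if G.Adj v u then 1 else 0) := by
    by_cases hu : u = v
    · subst hu
      simp [starVec, sq]
    · by_cases ha : G.Adj v u <;> simp [starVec, hu, ha]
  rw [dotProduct, Finset.sum_congr rfl fun u _ => hsq u, Finset.sum_add_distrib,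
    Finset.sum_ite_eq', if_pos (Finset.mem_univ _), Finset.sum_boole, ← G.neighborFinset_eq_filter,
    G.card_neighborFinset_eq_degree]
  ring

theorem sq_le_bMat_mulVec_starVec (o : Orientation G) (v : V) (e : G.edgeSet) :
    (if v ∈ (e : Sym2 V) then ((G.degree v : ℝ) + 1) ^ 2 else 0) ≤
      (bMat G o *ᵥ starVec G v) e ^ 2 := by
  split_ifs with he
  · have hadj := o.adj_head_tail e
    rw [bMat_mulVec_apply]
    rw [o.consistent e, Sym2.mem_iff] at he
    refine le_of_eq ?_
    rcases he with rfl | rfl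
    · simp [starVec, hadj, hadj.ne.symm]
    · simp [starVec, hadj.symm, hadj.ne]
      ring
  · exact sq_nonneg _

theorem degree_mul_le_dotProduct_mulVec_starVec (o : Orientation G) (v : V) :
    G.degree v * (G.degree v + 1) ^ 2 ≤
      starVec G v ⬝ᵥ (((bMat G o)ᵀ * bMat G o) *ᵥ starVec G v) := calc
  (G.degree v : ℝ) * (G.degree v + 1) ^ 2
      = ∑ e : G.edgeSet, if v ∈ (e : Sym2 V) then ((G.degree v : ℝ) + 1) ^ 2 else 0 := by
        rw [Finset.sum_ite, Finset.sum_const_zero, add_zero, Finset.sum_const, nsmul_eq_mul,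
          card_filter_mem_edgeSet]
  _ ≤ ∑ e, (bMat G o *ᵥ starVec G v) e ^ 2 :=
        Finset.sum_le_sum fun e _ => sq_le_bMat_mulVec_starVec o v e
  _ = starVec G v ⬝ᵥ (((bMat G o)ᵀ * bMat G o) *ᵥ starVec G v) := by
        rw [← Matrix.mulVec_mulVec, Matrix.dotProduct_mulVec, Matrix.vecMul_transpose, dotProduct]
        simp only [sq]

theorem maxDegree_add_one_le_sSup_spectrum [Nonempty G.edgeSet] (o : Orientation G) :
    (G.maxDegree : ℝ) + 1 ≤ sSup (spectrum ℝ ((bMat G o)ᵀ * bMat G o)) := by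
  have e₀ : G.edgeSet := Classical.arbitrary _
  have : Nonempty V := ⟨o.head e₀⟩
  obtain ⟨v, hv⟩ := G.exists_maximal_degree_vertex
  have hd : (0 : ℝ) < G.degree v := by
    have := G.degree_le_maxDegree (o.head e₀)
    have := (G.degree_pos_iff_exists_adj _).mpr ⟨_, o.adj_head_tail e₀⟩
    exact_mod_cast (by omega : 0 < G.degree v)
  have hL : ((bMat G o)ᵀ * bMat G o).IsHermitian := by
    simpa using Matrix.isHermitian_conjTranspose_mul_self (bMat G o)
  have hRayleigh := hL.dotProduct_mulVec_le
    (fun _ h => le_csSup (Matrix.finite_spectrum _).bddAbove h) (starVec G v)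
  rw [starVec_dotProduct_self] at hRayleigh
  have hlow := degree_mul_le_dotProduct_mulVec_starVec o v
  rw [hv]
  nlinarith [mul_pos hd (by positivity : (0 : ℝ) < G.degree v + 1)]

end

/-- `λ₁ ≤ max {μ₁, 3·max_e △(e)}`, and if the number of triangles of
`G` is at most `⌊(Δ(G)+1)/3⌋` then `λ₁ = μ₁`, where `λ₁` and `μ₁` are the largest
eigenvalues of `H(G)` and of the Laplacian `L(G) = Bᵀ B` respectively. -/
theorem statement18 (G : SimpleGraph V) [Nonempty G.edgeSet]
    (o : Orientation G) (τ : TriOrientation G) :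
    sSup (spectrum ℝ (helm G o τ)) ≤
      max (sSup (spectrum ℝ ((bMat G o)ᵀ * bMat G o)))
        (3 * (((Finset.univ.sup fun e : G.edgeSet => triDeg G (e : Sym2 V)) : ℕ) : ℝ)) ∧
    (Fintype.card (Triangle G) ≤ (G.maxDegree + 1) / 3 →
      sSup (spectrum ℝ (helm G o τ)) = sSup (spectrum ℝ ((bMat G o)ᵀ * bMat G o))) := by
  set m := Finset.univ.sup fun e : G.edgeSet => triDeg G (e : Sym2 V)
  have hm : (0 : ℝ) ≤ 3 * m := by positivity
  have hrow (e : G.edgeSet) : ∑ f, |((cMat G o τ)ᵀ * cMat G o τ) e f| ≤ 3 * (m : ℝ) :=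
    (sum_abs_transpose_cMat_mul_cMat_le o τ e).trans (by
      gcongr
      exact Finset.le_sup (f := fun e : G.edgeSet => triDeg G e) (Finset.mem_univ e))
  refine ⟨Matrix.sSup_spectrum_add_le (cMat_mul_bMat o τ) hm hrow, fun hcard => ?_⟩
  have hΔ := maxDegree_add_one_le_sSup_spectrum o
  have h3m : 3 * (m : ℝ) ≤ G.maxDegree + 1 := by
    have : m ≤ Fintype.card (Triangle G) := Finset.sup_le fun e _ => Finset.card_filter_le _ _
    exact_mod_cast (by omega : 3 * m ≤ G.maxDegree + 1)
  exact Matrix.sSup_spectrum_add_eq (cMat_mul_bMat o τ) hm hrow (h3m.trans hΔ)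
    (lt_of_lt_of_le (by positivity) hΔ)

end HelmPaper
end
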